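/- The type normalisation rules are sound for strong isomorphism: every inner rule σ ⇝ τ and every top rule σ ⟹ τ satisfies σ ≈ₛ τ. -/

import Mathlib

namespace TypeIso

open Relation

/-- Untyped λ-terms with named variables. -/
inductive Term : Type
  | var : ℕ → Term
  | app : Term → Term → Term
  | lam : ℕ → Term → Term
deriving DecidableEq

namespace Term

/-- Free variables. -/
def fv : Term → Finset ℕ
  | var x => {x}
  | app M N => fv M ∪ fv N
  | lam x M => fv M \ {x}

/-- Substitution `M[N/x]` (naive; adequate for the linear terms considered). -/
def subst : Term → ℕ → Term → Term
  | var y, x, N => if y = x then N else var y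
  | app M₁ M₂, x, N => app (subst M₁ x N) (subst M₂ x N)
  | lam y M, x, N => if y = x then lam y M else lam y (subst M x N)

end Term

open Term

/-- One-step β-reduction. -/
inductive Beta : Term → Term → Prop
  | beta (x M N) : Beta (Term.app (Term.lam x M) N) (Term.subst M x N)
  | appL {M M'} (N) : Beta M M' → Beta (Term.app M N) (Term.app M' N)
  | appR (M) {N N'} : Beta N N' → Beta (Term.app M N) (Term.app M N')
  | lam (x) {M M'} : Beta M M' → Beta (Term.lam x M) (Term.lam x M')

/-- One-step η-reduction. -/
inductive Eta : Term → Term → Prop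
  | eta (x M) : x ∉ fv M → Eta (Term.lam x (Term.app M (Term.var x))) M
  | appL {M M'} (N) : Eta M M' → Eta (Term.app M N) (Term.app M' N)
  | appR (M) {N N'} : Eta N N' → Eta (Term.app M N) (Term.app M N')
  | lam (x) {M M'} : Eta M M' → Eta (Term.lam x M) (Term.lam x M')

def BetaStar : Term → Term → Prop := ReflTransGen Beta
def EtaStar : Term → Term → Prop := ReflTransGen Eta
/-- η-expansion: the converse of one-step η-reduction. -/
def EtaExp : Term → Term → Prop := fun a b => Eta b a
def EtaExpStar : Term → Term → Prop := ReflTransGen EtaExp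
def BetaConv : Term → Term → Prop := EqvGen Beta
def BetaEta : Term → Term → Prop := fun a b => Beta a b ∨ Eta a b
def BetaEtaConv : Term → Term → Prop := EqvGen BetaEta

def BetaEtaRed : Term → Term → Prop := ReflTransGen BetaEta

/-- `appList h [a₁,…,aₙ] = h a₁ … aₙ`. -/
def appList (h : Term) (args : List Term) : Term := args.foldl Term.app h
/-- `lamList [y₁,…,yₙ] M = λ y₁ … yₙ. M`. -/
def lamList (xs : List ℕ) (body : Term) : Term := xs.foldr Term.lam body

/-- β-normal finite hereditary permutators:
`λ x y₁ … yₙ. x (P₁ y_{π(1)}) … (Pₙ y_{π(n)})` with each `Pᵢ` an FHP. -/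
inductive FHPnf : Term → Prop
  | mk (x : ℕ) (ys : List ℕ) (Ps : List Term) (π : Equiv.Perm (Fin ys.length))
      (hlen : Ps.length = ys.length)
      (hx : x ∉ ys) (hnd : ys.Nodup)
      (hPs : ∀ P ∈ Ps, FHPnf P) :
      FHPnf (Term.lam x (lamList ys (appList (Term.var x)
        (List.ofFn fun i : Fin ys.length =>
          Term.app (Ps.get (Fin.cast hlen.symm i)) (Term.var (ys.get (π i)))))))

/-- Finite hereditary permutators (modulo β-conversion). -/
def FHP (M : Term) : Prop := ∃ N, BetaConv M N ∧ FHPnf N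

/-- β-normal finite hereditary identities:
`λ x y₁ … yₙ. x (Id₁ y₁) … (Idₙ yₙ)` with each `Idᵢ` an FHI. -/
inductive FHInf : Term → Prop
  | mk (x : ℕ) (ys : List ℕ) (Ids : List Term)
      (hlen : Ids.length = ys.length)
      (hx : x ∉ ys) (hnd : ys.Nodup)
      (hIds : ∀ P ∈ Ids, FHInf P) :
      FHInf (Term.lam x (lamList ys (appList (Term.var x)
        (List.ofFn fun i : Fin ys.length =>
          Term.app (Ids.get (Fin.cast hlen.symm i)) (Term.var (ys.get i))))))

/-- Finite hereditary identities (modulo β-conversion). -/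
def FHI (M : Term) : Prop := ∃ N, BetaConv M N ∧ FHInf N

/-- Types with atoms, ω, arrow, intersection and union. -/
inductive Ty : Type
  | atom : ℕ → Ty
  | omega : Ty
  | arr : Ty → Ty → Ty
  | and : Ty → Ty → Ty
  | or : Ty → Ty → Ty
deriving DecidableEq

/-- Semantic type equivalence `≅`: the least congruence with
`φ ≅ ω→φ`, `ω ≅ ω→ω`, `σ ≅ σ∧ω ≅ ω∧σ`, `ω ≅ σ∨ω ≅ ω∨σ`. -/
inductive SemEq : Ty → Ty → Prop
  | refl (σ) : SemEq σ σ
  | symm : SemEq σ τ → SemEq τ σ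
  | trans : SemEq σ τ → SemEq τ ρ → SemEq σ ρ
  | arr : SemEq σ σ' → SemEq τ τ' → SemEq (Ty.arr σ τ) (Ty.arr σ' τ')
  | and : SemEq σ σ' → SemEq τ τ' → SemEq (Ty.and σ τ) (Ty.and σ' τ')
  | or : SemEq σ σ' → SemEq τ τ' → SemEq (Ty.or σ τ) (Ty.or σ' τ')
  | atomFun (a) : SemEq (Ty.atom a) (Ty.arr Ty.omega (Ty.atom a))
  | omegaFun : SemEq Ty.omega (Ty.arr Ty.omega Ty.omega)
  | andOmegaR (σ) : SemEq σ (Ty.and σ Ty.omega)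
  | andOmegaL (σ) : SemEq σ (Ty.and Ty.omega σ)
  | orOmegaR (σ) : SemEq Ty.omega (Ty.or σ Ty.omega)
  | orOmegaL (σ) : SemEq Ty.omega (Ty.or Ty.omega σ)

/-- Relevant environments, considered up to permutation in the rules. -/
abbrev Env := List (ℕ × Ty)

def Env.dom (Γ : Env) : List ℕ := Γ.map Prod.fst

def EnvDisj (Γ₁ Γ₂ : Env) : Prop := ∀ x, x ∈ Γ₁.dom → x ∉ Γ₂.dom

/-- The intersection-union type assignment system for linear λ-terms (Figure 1). -/
inductive Deriv : Env → Term → Ty → Prop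
  | ax (x σ) : Deriv [(x, σ)] (Term.var x) σ
  | eqv {Γ M σ τ} : Deriv Γ M σ → SemEq σ τ → Deriv Γ M τ
  | perm {Γ Γ' M σ} : Deriv Γ M σ → Γ.Perm Γ' → Deriv Γ' M σ
  | arrI {Γ x σ M τ} : Deriv ((x, σ) :: Γ) M τ → Deriv Γ (Term.lam x M) (Ty.arr σ τ)
  | arrE {Γ₁ Γ₂ M N σ τ} : Deriv Γ₁ M (Ty.arr σ τ) → Deriv Γ₂ N σ → EnvDisj Γ₁ Γ₂ →
      Deriv (Γ₁ ++ Γ₂) (Term.app M N) τ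
  | andI {Γ M σ τ} : Deriv Γ M σ → Deriv Γ M τ → Deriv Γ M (Ty.and σ τ)
  | andE₁ {Γ M σ τ} : Deriv Γ M (Ty.and σ τ) → Deriv Γ M σ
  | andE₂ {Γ M σ τ} : Deriv Γ M (Ty.and σ τ) → Deriv Γ M τ
  | orI₁ {Γ M σ τ} : Deriv Γ M σ → Deriv Γ M (Ty.or σ τ)
  | orI₂ {Γ M σ τ} : Deriv Γ M σ → Deriv Γ M (Ty.or τ σ)
  | orE {Γ₁ Γ₂ x M N σ τ ζ ρ} :
      Deriv ((x, Ty.and σ ζ) :: Γ₁) M ρ →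
      Deriv ((x, Ty.and τ ζ) :: Γ₁) M ρ →
      Deriv Γ₂ N (Ty.and (Ty.or σ τ) ζ) → EnvDisj Γ₁ Γ₂ →
      Deriv (Γ₁ ++ Γ₂) (Term.subst M x N) ρ

/-- Linear λ-terms: every free or bound variable occurs exactly once. -/
inductive Linear : Term → Prop
  | var (x) : Linear (Term.var x)
  | app {M N} : Linear M → Linear N → Disjoint (fv M) (fv N) → Linear (Term.app M N)
  | lam {x M} : Linear M → x ∈ fv M → Linear (Term.lam x M)

/-- A variable fresh for a finite set. -/
def freshVar (s : Finset ℕ) : ℕ := (s.sup id) + 1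

/-- Composition `λx. P (Q x)` with a fresh `x`. -/
def tcomp (P Q : Term) : Term :=
  Term.lam (freshVar (fv P ∪ fv Q))
    (Term.app P (Term.app Q (Term.var (freshVar (fv P ∪ fv Q)))))

/-- `P` and `Q` are inverse of each other: both compositions are βη-equal to the identity. -/
def InvPair (P Q : Term) : Prop :=
  ∃ x, BetaEtaConv (tcomp P Q) (Term.lam x (Term.var x)) ∧
       BetaEtaConv (tcomp Q P) (Term.lam x (Term.var x))

/-- Type isomorphism `σ ≈ τ`. -/
def TyIso (σ τ : Ty) : Prop :=
  ∃ P Q, FHP P ∧ FHP Q ∧ InvPair P Q ∧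
    Deriv [] P (Ty.arr σ τ) ∧ Deriv [] Q (Ty.arr τ σ)

/-- Strong type isomorphism `σ ≈ₛ τ`: proved by a finite hereditary identity. -/
def StrongIso (σ τ : Ty) : Prop :=
  ∃ Id, FHI Id ∧ Deriv [] Id (Ty.arr σ τ) ∧ Deriv [] Id (Ty.arr τ σ)

/-- The normalisation pre-order `≤` on types. -/
inductive NormLe : Ty → Ty → Prop
  | refl (σ) : NormLe σ σ
  | trans {σ τ ρ} : NormLe σ τ → NormLe τ ρ → NormLe σ ρ
  | leOmega (σ) : NormLe σ Ty.omega
  | andE₁ (σ τ) : NormLe (Ty.and σ τ) σ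
  | andE₂ (σ τ) : NormLe (Ty.and σ τ) τ
  | orI₁ (σ τ) : NormLe σ (Ty.or σ τ)
  | orI₂ (σ τ) : NormLe τ (Ty.or σ τ)
  | andI {σ τ ρ} : NormLe σ τ → NormLe σ ρ → NormLe σ (Ty.and τ ρ)
  | orE {σ τ ρ} : NormLe σ τ → NormLe ρ τ → NormLe (Ty.or σ ρ) τ
  | atomArr (a σ) : NormLe (Ty.atom a) (Ty.arr σ (Ty.atom a))
  | omegaArr (σ) : NormLe Ty.omega (Ty.arr σ Ty.omega)
  | arr {σ σ' τ τ'} : NormLe σ' σ → NormLe τ τ' → NormLe (Ty.arr σ τ) (Ty.arr σ' τ')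

/-- Inner type normalisation rules `σ ⇝ τ`. -/
inductive InnerStep : Ty → Ty → Prop
  | atomRule (a) : InnerStep (Ty.arr Ty.omega (Ty.atom a)) (Ty.atom a)
  | omegaRule {σ} : NormLe Ty.omega σ → σ ≠ Ty.omega → InnerStep σ Ty.omega
  | distArrAnd (σ τ ρ) :
      InnerStep (Ty.arr σ (Ty.and τ ρ)) (Ty.and (Ty.arr σ τ) (Ty.arr σ ρ))
  | distAndArr (σ τ ρ ζ) :
      InnerStep (Ty.arr (Ty.and (Ty.or σ τ) ρ) ζ)
                (Ty.arr (Ty.or (Ty.and σ ρ) (Ty.and τ ρ)) ζ)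
  | distOrArr (σ τ ρ) :
      InnerStep (Ty.arr (Ty.or σ τ) ρ) (Ty.and (Ty.arr σ ρ) (Ty.arr τ ρ))
  | distArrOr (σ τ ρ ζ) :
      InnerStep (Ty.arr σ (Ty.or (Ty.and τ ρ) ζ))
                (Ty.arr σ (Ty.and (Ty.or τ ζ) (Ty.or ρ ζ)))
  | eraseAnd {σ τ} : NormLe σ τ → InnerStep (Ty.and σ τ) σ
  | eraseOr {σ τ} : NormLe σ τ → InnerStep (Ty.or σ τ) τ

/-- Type contexts. -/
inductive TyCtx : Type
  | hole : TyCtx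
  | arrL : TyCtx → Ty → TyCtx
  | arrR : Ty → TyCtx → TyCtx
  | andL : TyCtx → Ty → TyCtx
  | andR : Ty → TyCtx → TyCtx
  | orL : TyCtx → Ty → TyCtx
  | orR : Ty → TyCtx → TyCtx

/-- Filling the hole of a type context. -/
def TyCtx.fill : TyCtx → Ty → Ty
  | TyCtx.hole, τ => τ
  | TyCtx.arrL C σ, τ => Ty.arr (C.fill τ) σ
  | TyCtx.arrR σ C, τ => Ty.arr σ (C.fill τ)
  | TyCtx.andL C σ, τ => Ty.and (C.fill τ) σ
  | TyCtx.andR σ C, τ => Ty.and σ (C.fill τ)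
  | TyCtx.orL C σ, τ => Ty.or (C.fill τ) σ
  | TyCtx.orR σ C, τ => Ty.or σ (C.fill τ)

/-- Top normalisation rules `σ ⟹ τ`: contextual closure of the inner rules,
plus `(σ∧τ)∨ρ ⟹ (σ∨ρ)∧(τ∨ρ)` at the top or in right-hand sides of arrows. -/
inductive TopStep : Ty → Ty → Prop
  | ctx {σ τ} (C : TyCtx) : InnerStep σ τ → TopStep (C.fill σ) (C.fill τ)
  | dist (σ τ ρ) :
      TopStep (Ty.or (Ty.and σ τ) ρ) (Ty.and (Ty.or σ ρ) (Ty.or τ ρ))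
  | arrR {τ τ'} (σ) : TopStep τ τ' → TopStep (Ty.arr σ τ) (Ty.arr σ τ')

open Classical in
/-- The normal form of a type w.r.t. the top normalisation rules. -/
noncomputable def nf (σ : Ty) : Ty :=
  if h : ∃ ν, Relation.ReflTransGen TopStep σ ν ∧ ∀ ρ, ¬ TopStep ν ρ then h.choose else σ

/-- `mkArrow [ξ₁,…,ξₙ] μ = ξ₁ → … → ξₙ → μ`. -/
def mkArrow (args : List Ty) (res : Ty) : Ty := args.foldr Ty.arr res

/-- Similarity between sequences of normal types. -/
inductive TySim : List Ty → List Ty → Prop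
  | refl (l) : TySim l l
  | symm {l r} : TySim l r → TySim r l
  | trans {l r s} : TySim l r → TySim r s → TySim l s
  | mergeAnd (l₁ l₂ r₁ r₂ : List Ty) (η₁ η₂ θ₁ θ₂ : Ty) :
      l₁.length = r₁.length →
      TySim (l₁ ++ η₁ :: η₂ :: l₂) (r₁ ++ θ₁ :: θ₂ :: r₂) →
      TySim (l₁ ++ nf (Ty.and η₁ η₂) :: l₂) (r₁ ++ nf (Ty.and θ₁ θ₂) :: r₂)
  | mergeOr (l₁ l₂ r₁ r₂ : List Ty) (η₁ η₂ θ₁ θ₂ : Ty) :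
      l₁.length = r₁.length →
      TySim (l₁ ++ η₁ :: η₂ :: l₂) (r₁ ++ θ₁ :: θ₂ :: r₂) →
      TySim (l₁ ++ nf (Ty.or η₁ η₂) :: l₂) (r₁ ++ nf (Ty.or θ₁ θ₂) :: r₂)
  | arrow (m n : ℕ) (ξ χ : Fin n → Fin m → Ty) (μ ν : Fin m → Ty)
      (π : Equiv.Perm (Fin n)) :
      (∀ i, TySim (List.ofFn (ξ i)) (List.ofFn (χ i))) →
      TySim (List.ofFn μ) (List.ofFn ν) →
      TySim (List.ofFn fun j => nf (mkArrow (List.ofFn fun i => ξ i j) (μ j)))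
            (List.ofFn fun j => nf (mkArrow (List.ofFn fun i => χ (π i) j) (ν j)))


/-!
Every rule is witnessed by the towers `idTower m` of finite hereditary identities, which
η-expand their argument to depth `m`. A typing `M : σ` transports along a deep enough such
expansion to a typing at `τ` whenever `σ` coerces syntactically into `τ`: through the
congruences, the distributive laws (by `∨`-elimination on the expanded variables) and the
pre-order `≤` (after cut elimination). The two sides of each rule coerce into each other, so
one tower is typable at both `σ → τ` and `τ → σ`.
-/

theorem fv_lamList (ys : List ℕ) (M : Term) : fv (lamList ys M) = fv M \ ys.toFinset := by
  induction ys with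
  | nil => simp [lamList]
  | cons y ys ih =>
      simp only [lamList, List.foldr_cons] at ih ⊢
      rw [fv, ih]
      ext
      simp only [Finset.mem_sdiff, List.mem_toFinset, List.mem_cons, Finset.mem_singleton]
      tauto

theorem mem_fv_appList {x : ℕ} (M : Term) (Ns : List Term) :
    x ∈ fv (appList M Ns) ↔ x ∈ fv M ∨ ∃ N ∈ Ns, x ∈ fv N := by
  induction Ns generalizing M with
  | nil => simp [appList]
  | cons N Ns ih =>
      simp only [appList, List.foldl_cons] at ih ⊢
      simp [ih, fv, or_assoc]

theorem subst_eq_self_of_notMem_fv {M : Term} {x : ℕ} (N : Term) (hx : x ∉ fv M) :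
    M.subst x N = M := by
  induction M with
  | var y => simp_all [fv, Term.subst, eq_comm]
  | app M₁ M₂ ih₁ ih₂ =>
      simp only [fv, Finset.mem_union, not_or] at hx
      simp [Term.subst, ih₁ hx.1, ih₂ hx.2]
  | lam y M ih =>
      by_cases h : y = x
      · simp [Term.subst, h]
      · simp only [fv, Finset.mem_sdiff, Finset.mem_singleton, not_and, not_not] at hx
        simp [Term.subst, h, ih (fun hM => h (hx hM).symm)]

theorem subst_lamList {ys : List ℕ} {x : ℕ} (hx : x ∉ ys) (M N : Term) :
    (lamList ys M).subst x N = lamList ys (M.subst x N) := by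
  induction ys with
  | nil => rfl
  | cons y ys ih =>
      simp only [List.mem_cons, not_or] at hx
      simp only [lamList, List.foldr_cons] at ih ⊢
      rw [Term.subst, if_neg (Ne.symm hx.1), ih hx.2]

theorem subst_appList (M : Term) (Ns : List Term) (x : ℕ) (N : Term) :
    (appList M Ns).subst x N = appList (M.subst x N) (Ns.map (·.subst x N)) := by
  induction Ns generalizing M with
  | nil => rfl
  | cons N' Ns ih => exact ih (Term.app M N')

theorem freshVar_notMem (s : Finset ℕ) : freshVar s ∉ s := fun h =>
  Nat.not_succ_le_self _ (Finset.le_sup (f := id) h)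

theorem freshVar_toFinset_notMem (l : List ℕ) : freshVar l.toFinset ∉ l := fun h =>
  freshVar_notMem _ (List.mem_toFinset.mpr h)

def etaExpand (P : Term) (ys : List ℕ) (M : Term) : Term :=
  lamList ys (appList M (ys.map fun y => Term.app P (Term.var y)))

theorem fv_etaExpand {P : Term} (hP : fv P = ∅) (ys : List ℕ) (M : Term) :
    fv (etaExpand P ys M) = fv M \ ys.toFinset := by
  ext x
  simp +contextual [etaExpand, fv_lamList, mem_fv_appList, fv, hP]

theorem subst_etaExpand_var {P : Term} (hP : fv P = ∅) {ys : List ℕ} {z : ℕ} (hz : z ∉ ys)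
    (N : Term) : (etaExpand P ys (Term.var z)).subst z N = etaExpand P ys N := by
  rw [etaExpand, subst_lamList hz, subst_appList, etaExpand, List.map_map]
  congr 2
  · simp [Term.subst]
  · refine List.map_congr_left fun y hy => ?_
    have hyz : y ≠ z := fun h => hz (h ▸ hy)
    simp [Term.subst, hyz, subst_eq_self_of_notMem_fv N (show z ∉ fv P by simp [hP])]

/-- The width grows with the height, so a high enough tower η-expands deep enough for any
given pair of types. -/
def idTower : ℕ → Term
  | 0 => Term.lam 0 (Term.var 0)
  | n + 1 => Term.lam 0 (etaExpand (idTower n) (List.range' 1 (n + 1)) (Term.var 0))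

theorem fv_idTower (n : ℕ) : fv (idTower n) = ∅ := by
  cases n with
  | zero => simp [idTower, fv]
  | succ n =>
      rw [idTower, fv, fv_etaExpand (fv_idTower n)]
      ext; simp [fv]

theorem fhinf_idTower (n : ℕ) : FHInf (idTower n) := by
  induction n with
  | zero => simpa [idTower, lamList, appList] using FHInf.mk 0 [] [] rfl (by simp) List.nodup_nil
  | succ n ih =>
      have hlen : (List.replicate (n + 1) (idTower n)).length = (List.range' 1 (n + 1)).length := by
        simp
      have h := FHInf.mk 0 (List.range' 1 (n + 1)) _ hlen (by simp [List.mem_range'_1])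
        (List.nodup_range' 1 Nat.one_pos) (by simp [ih])
      convert h using 3
      rw [idTower, etaExpand, ← List.ofFn_getElem_eq_map]
      simp

theorem fhi_idTower (n : ℕ) : FHI (idTower n) := ⟨_, EqvGen.refl _, fhinf_idTower n⟩


namespace Deriv

variable {Γ : Env} {M : Term} {σ τ : Ty}

theorem toOmega (d : Deriv Γ M σ) : Deriv Γ M Ty.omega :=
  (d.eqv (SemEq.andOmegaR σ)).andE₂

theorem andComm (d : Deriv Γ M (Ty.and σ τ)) : Deriv Γ M (Ty.and τ σ) :=
  d.andE₂.andI d.andE₁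

end Deriv

theorem envDisj_nil_left (Γ : Env) : EnvDisj [] Γ := by
  simp [EnvDisj, Env.dom]

theorem envDisj_singleton_right {Γ : Env} {y : ℕ} (hy : y ∉ Γ.dom) (A : Ty) :
    EnvDisj Γ [(y, A)] := by
  simp only [EnvDisj, Env.dom, List.map_cons, List.map_nil, List.mem_singleton]
  rintro x hx rfl
  exact hy hx

theorem Deriv.app_closed {Γ : Env} {P N : Term} {σ τ : Ty} (hP : Deriv [] P (Ty.arr σ τ))
    (hN : Deriv Γ N σ) : Deriv Γ (Term.app P N) τ := by
  simpa using hP.arrE hN (envDisj_nil_left Γ)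

theorem Deriv.app_var {P : Term} {σ τ : Ty} (hP : Deriv [] P (Ty.arr σ τ)) (y : ℕ) :
    Deriv [(y, σ)] (Term.app P (Term.var y)) τ :=
  hP.app_closed (Deriv.ax y σ)

theorem Deriv.app_cons {Γ : Env} {M N : Term} {A B C : Ty} {y : ℕ}
    (hM : Deriv Γ M (Ty.arr A B)) (hN : Deriv [(y, C)] N A) (hy : y ∉ Γ.dom) :
    Deriv ((y, C) :: Γ) (Term.app M N) B :=
  (hM.arrE hN (envDisj_singleton_right hy C)).perm List.perm_append_comm

def FreshFor (ys : List ℕ) (Γ : Env) : Prop := ys.Nodup ∧ ys.Disjoint Γ.dom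

namespace FreshFor

variable {ys : List ℕ} {Γ : Env} {y : ℕ}

theorem head_notMem (h : FreshFor (y :: ys) Γ) : y ∉ Γ.dom :=
  (List.disjoint_cons_left.mp h.2).1

theorem tail (h : FreshFor (y :: ys) Γ) (C : Ty) : FreshFor ys ((y, C) :: Γ) := by
  obtain ⟨hy, hys⟩ := List.nodup_cons.mp h.1
  refine ⟨hys, ?_⟩
  simp only [Env.dom, List.map_cons]
  exact List.disjoint_cons_right.mpr ⟨hy, (List.disjoint_cons_left.mp h.2).2⟩

theorem singleton (hys : ys.Nodup) {z : ℕ} (hz : z ∉ ys) (A : Ty) : FreshFor ys [(z, A)] := by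
  refine ⟨hys, ?_⟩
  simpa [Env.dom] using hz

end FreshFor

theorem freshFor_range' (k : ℕ) (A : Ty) : FreshFor (List.range' 1 k) [(0, A)] :=
  FreshFor.singleton (List.nodup_range' 1 Nat.one_pos) (by simp [List.mem_range'_1]) A

theorem Deriv.etaExpand_orE {P : Term} (hP : fv P = ∅) {ys : List ℕ} {Γ : Env} {M : Term}
    {σ τ ζ ρ : Ty}
    (h₁ : ∀ z ∉ ys, Deriv [(z, Ty.and σ ζ)] (etaExpand P ys (Term.var z)) ρ)
    (h₂ : ∀ z ∉ ys, Deriv [(z, Ty.and τ ζ)] (etaExpand P ys (Term.var z)) ρ)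
    (hM : Deriv Γ M (Ty.and (Ty.or σ τ) ζ)) : Deriv Γ (etaExpand P ys M) ρ := by
  have hz := freshVar_toFinset_notMem ys
  simpa [subst_etaExpand_var hP hz] using Deriv.orE (h₁ _ hz) (h₂ _ hz) hM (envDisj_nil_left Γ)

/-- Atoms and `ω` are read as `ω → φ` and `ω → ω`, so every type absorbs one more argument. -/
theorem Deriv.etaExpand_of_forall_arr_self {P : Term} (hPfv : fv P = ∅)
    (hP : ∀ σ, Deriv [] P (Ty.arr σ σ)) {ys : List ℕ} :
    ∀ {Γ : Env} {M : Term} {σ : Ty}, FreshFor ys Γ → Deriv Γ M σ →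
      Deriv Γ (etaExpand P ys M) σ := by
  induction ys with
  | nil => exact fun _ d => d
  | cons y ys ih =>
    have step : ∀ {Γ M A B}, FreshFor (y :: ys) Γ → Deriv Γ M (Ty.arr A B) →
        Deriv Γ (etaExpand P (y :: ys) M) (Ty.arr A B) := fun hf d =>
      (ih (hf.tail _) (d.app_cons ((hP _).app_var y) hf.head_notMem)).arrI
    intro Γ M σ hf d
    induction σ generalizing Γ M with
    | atom a => exact (step hf (d.eqv (SemEq.atomFun a))).eqv (SemEq.atomFun a).symm
    | omega => exact (step hf (d.eqv SemEq.omegaFun)).eqv SemEq.omegaFun.symm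
    | arr => exact step hf d
    | and σ τ ihσ ihτ => exact (ihσ hf d.andE₁).andI (ihτ hf d.andE₂)
    | or σ τ ihσ ihτ =>
      refine Deriv.etaExpand_orE hPfv (fun z hz => ?_) (fun z hz => ?_) (d.andI d.toOmega)
      · exact (ihσ (FreshFor.singleton hf.1 hz _) (Deriv.ax z _).andE₁).orI₁
      · exact (ihτ (FreshFor.singleton hf.1 hz _) (Deriv.ax z _).andE₁).orI₂

theorem deriv_idTower_arr_self (m : ℕ) (σ : Ty) : Deriv [] (idTower m) (Ty.arr σ σ) := by
  induction m generalizing σ with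
  | zero => exact (Deriv.ax 0 σ).arrI
  | succ n ih =>
    exact (Deriv.etaExpand_of_forall_arr_self (fv_idTower n) ih (freshFor_range' _ σ)
      (Deriv.ax 0 σ)).arrI

theorem Deriv.etaExpand_idTower {Γ : Env} {M : Term} {σ : Ty} {ys : List ℕ} (m : ℕ)
    (hf : FreshFor ys Γ) (d : Deriv Γ M σ) : Deriv Γ (etaExpand (idTower m) ys M) σ :=
  Deriv.etaExpand_of_forall_arr_self (fv_idTower m) (deriv_idTower_arr_self m) hf d

def Coerces (σ τ : Ty) : Prop :=
  ∃ N, ∀ m ≥ N, ∀ (Γ : Env) (M : Term) (ys : List ℕ), FreshFor ys Γ → N ≤ ys.length →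
    Deriv Γ M σ → Deriv Γ (etaExpand (idTower m) ys M) τ

namespace Coerces

variable {σ σ' τ τ' ρ ζ : Ty}

theorem refl (σ : Ty) : Coerces σ σ :=
  ⟨0, fun m _ _ _ _ hf _ d => d.etaExpand_idTower m hf⟩

theorem precomp (hc : Coerces σ' τ) (h : ∀ {Γ M}, Deriv Γ M σ → Deriv Γ M σ') : Coerces σ τ := by
  obtain ⟨N, hN⟩ := hc
  exact ⟨N, fun m hm Γ M ys hf hl d => hN m hm Γ M ys hf hl (h d)⟩

theorem postcomp (hc : Coerces σ τ) (h : ∀ {Γ M}, Deriv Γ M τ → Deriv Γ M τ') : Coerces σ τ' := by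
  obtain ⟨N, hN⟩ := hc
  exact ⟨N, fun m hm Γ M ys hf hl d => h (hN m hm Γ M ys hf hl d)⟩

theorem of_deriv (h : ∀ {Γ M}, Deriv Γ M σ → Deriv Γ M τ) : Coerces σ τ :=
  (refl σ).postcomp h

theorem omega (σ : Ty) : Coerces σ Ty.omega :=
  of_deriv Deriv.toOmega

theorem and_right (h₁ : Coerces σ τ) (h₂ : Coerces σ ρ) : Coerces σ (Ty.and τ ρ) := by
  obtain ⟨N₁, hN₁⟩ := h₁
  obtain ⟨N₂, hN₂⟩ := h₂
  exact ⟨max N₁ N₂, fun m hm Γ M ys hf hl d =>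
    (hN₁ m (by omega) Γ M ys hf (by omega) d).andI (hN₂ m (by omega) Γ M ys hf (by omega) d)⟩

theorem or_and_left (h₁ : Coerces (Ty.and σ ζ) ρ) (h₂ : Coerces (Ty.and τ ζ) ρ) :
    Coerces (Ty.and (Ty.or σ τ) ζ) ρ := by
  obtain ⟨N₁, hN₁⟩ := h₁
  obtain ⟨N₂, hN₂⟩ := h₂
  refine ⟨max N₁ N₂, fun m hm Γ M ys hf hl d =>
    Deriv.etaExpand_orE (fv_idTower m) (fun z hz => ?_) (fun z hz => ?_) d⟩
  · exact hN₁ m (by omega) _ _ ys (FreshFor.singleton hf.1 hz _) (by omega) (Deriv.ax z _)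
  · exact hN₂ m (by omega) _ _ ys (FreshFor.singleton hf.1 hz _) (by omega) (Deriv.ax z _)

theorem or_left (h₁ : Coerces σ ρ) (h₂ : Coerces τ ρ) : Coerces (Ty.or σ τ) ρ :=
  ((h₁.precomp Deriv.andE₁).or_and_left (h₂.precomp Deriv.andE₁)).precomp fun d => d.andI d.toOmega

theorem and (h₁ : Coerces σ σ') (h₂ : Coerces τ τ') : Coerces (Ty.and σ τ) (Ty.and σ' τ') :=
  (h₁.precomp Deriv.andE₁).and_right (h₂.precomp Deriv.andE₂)

theorem or (h₁ : Coerces σ σ') (h₂ : Coerces τ τ') : Coerces (Ty.or σ τ) (Ty.or σ' τ') :=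
  (h₁.postcomp Deriv.orI₁).or_left (h₂.postcomp Deriv.orI₂)

theorem arr_of_app {σ τ C D : Ty} {N : ℕ}
    (happ : ∀ m ≥ N, ∀ (Γ : Env) (M : Term) (y : ℕ), y ∉ Γ.dom → Deriv Γ M σ →
      Deriv ((y, C) :: Γ) (Term.app M (Term.app (idTower m) (Term.var y))) τ)
    (h : Coerces τ D) : Coerces σ (Ty.arr C D) := by
  obtain ⟨N', hN'⟩ := h
  refine ⟨max N (N' + 1), fun m hm Γ M ys hf hl d => ?_⟩
  obtain ⟨y, ys, rfl⟩ := List.exists_cons_of_length_pos (by omega : 0 < ys.length)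
  exact (hN' m (by omega) _ _ ys (hf.tail C) (by simp at hl; omega)
    (happ m (by omega) Γ M y hf.head_notMem d)).arrI

theorem deriv_idTower (h : Coerces σ τ) : ∃ N, ∀ m ≥ N, Deriv [] (idTower m) (Ty.arr σ τ) := by
  obtain ⟨N, hN⟩ := h
  refine ⟨N + 1, fun m hm => ?_⟩
  obtain ⟨k, rfl⟩ : ∃ k, m = k + 1 := ⟨m - 1, by omega⟩
  exact (hN k (by omega) _ _ _ (freshFor_range' (k + 1) σ) (by simp; omega) (Deriv.ax 0 σ)).arrI

theorem arr {σ₁ σ₂ τ₁ τ₂ : Ty} (h₁ : Coerces τ₁ σ₁) (h₂ : Coerces σ₂ τ₂) :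
    Coerces (Ty.arr σ₁ σ₂) (Ty.arr τ₁ τ₂) := by
  obtain ⟨N, hN⟩ := h₁.deriv_idTower
  exact arr_of_app (N := N) (fun m hm _ _ y hy d => d.app_cons ((hN m hm).app_var y) hy) h₂

theorem arr_and_distrib (σ τ ρ : Ty) :
    Coerces (Ty.and (Ty.arr σ τ) (Ty.arr σ ρ)) (Ty.arr σ (Ty.and τ ρ)) := by
  refine arr_of_app (N := 0) (fun m _ Γ M y hy d => ?_) (refl _)
  have harg := (deriv_idTower_arr_self m σ).app_var y
  exact (d.andE₁.app_cons harg hy).andI (d.andE₂.app_cons harg hy)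

/-- The argument is split by `∨`-elimination, through a fresh copy `z` of it. -/
theorem arr_or_distrib (σ τ ρ : Ty) :
    Coerces (Ty.and (Ty.arr σ ρ) (Ty.arr τ ρ)) (Ty.arr (Ty.or σ τ) ρ) := by
  refine arr_of_app (N := 0) (fun m _ Γ M y hy d => ?_) (refl ρ)
  set z := freshVar (fv M ∪ Γ.dom.toFinset)
  have hzM : z ∉ fv M := fun h => freshVar_notMem _ (Finset.mem_union_left _ h)
  have hzΓ : z ∉ Γ.dom := fun h =>
    freshVar_notMem _ (Finset.mem_union_right _ (List.mem_toFinset.mpr h))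
  have branch : ∀ A, Deriv Γ M (Ty.arr A ρ) → Deriv ((z, Ty.and A Ty.omega) :: Γ)
      (Term.app M (Term.app (idTower m) (Term.var z))) ρ := fun A dA =>
    dA.app_cons ((deriv_idTower_arr_self m A).app_closed (Deriv.ax z _).andE₁) hzΓ
  have hsubst : (Term.app M (Term.app (idTower m) (Term.var z))).subst z (Term.var y) =
      Term.app M (Term.app (idTower m) (Term.var y)) := by
    simp [Term.subst, subst_eq_self_of_notMem_fv _ hzM,
      subst_eq_self_of_notMem_fv _ (show z ∉ fv (idTower m) by simp [fv_idTower])]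
  have h := Deriv.orE (branch σ d.andE₁) (branch τ d.andE₂)
    ((Deriv.ax y _).andI (Deriv.ax y _).toOmega) (envDisj_singleton_right hy _)
  rw [hsubst] at h
  exact h.perm List.perm_append_comm

end Coerces

def Ty.size : Ty → ℕ
  | Ty.atom _ => 0
  | Ty.omega => 0
  | Ty.arr σ τ => σ.size + τ.size + 1
  | Ty.and σ τ => σ.size + τ.size + 1
  | Ty.or σ τ => σ.size + τ.size + 1

/-- A cut-free presentation of `≤`. `Coerces` is not transitive (two nested η-expansions are not
one), so `≤` is realised through this form and its cut elimination `CutFreeLe.trans`. -/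
inductive CutFreeLe : Ty → Ty → Prop
  | refl (σ) : CutFreeLe σ σ
  | omegaR (σ) : CutFreeLe σ Ty.omega
  | preAnd₁ {σ ρ} (τ) : CutFreeLe σ ρ → CutFreeLe (Ty.and σ τ) ρ
  | preAnd₂ {τ ρ} (σ) : CutFreeLe τ ρ → CutFreeLe (Ty.and σ τ) ρ
  | preOr {σ τ ρ} : CutFreeLe σ ρ → CutFreeLe τ ρ → CutFreeLe (Ty.or σ τ) ρ
  | postAnd {σ τ ρ} : CutFreeLe σ τ → CutFreeLe σ ρ → CutFreeLe σ (Ty.and τ ρ)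
  | postOr₁ {σ τ} (ρ) : CutFreeLe σ τ → CutFreeLe σ (Ty.or τ ρ)
  | postOr₂ {σ τ} (ρ) : CutFreeLe σ τ → CutFreeLe σ (Ty.or ρ τ)
  | arr {σ₁ σ₂ τ₁ τ₂} : CutFreeLe τ₁ σ₁ → CutFreeLe σ₂ τ₂ →
      CutFreeLe (Ty.arr σ₁ σ₂) (Ty.arr τ₁ τ₂)
  | anyArr {τ} (σ δ) : CutFreeLe Ty.omega τ → CutFreeLe σ (Ty.arr δ τ)
  | atomArr {a τ} (δ) : CutFreeLe (Ty.atom a) τ → CutFreeLe (Ty.atom a) (Ty.arr δ τ)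
  | arrAtom {σ τ a} : CutFreeLe Ty.omega σ → CutFreeLe τ (Ty.atom a) →
      CutFreeLe (Ty.arr σ τ) (Ty.atom a)

namespace CutFreeLe

theorem trans : {σ τ ρ : Ty} → CutFreeLe σ τ → CutFreeLe τ ρ → CutFreeLe σ ρ
  | _, _, _, refl _, h => h
  | _, _, _, h, refl _ => h
  | _, _, _, _, omegaR _ => omegaR _
  | _, _, _, preAnd₁ τ s, h => preAnd₁ τ (s.trans h)
  | _, _, _, preAnd₂ σ s, h => preAnd₂ σ (s.trans h)
  | _, _, _, preOr s t, h => preOr (s.trans h) (t.trans h)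
  | _, _, _, h, postAnd r₁ r₂ => postAnd (h.trans r₁) (h.trans r₂)
  | _, _, _, h, postOr₁ ρ r => postOr₁ ρ (h.trans r)
  | _, _, _, h, postOr₂ ρ r => postOr₂ ρ (h.trans r)
  | _, _, _, _, anyArr _ δ r => anyArr _ δ r
  | _, _, _, postAnd s _, preAnd₁ _ r => s.trans r
  | _, _, _, postAnd _ t, preAnd₂ _ r => t.trans r
  | _, _, _, postOr₁ _ s, preOr r _ => s.trans r
  | _, _, _, postOr₂ _ s, preOr _ r => s.trans r
  | _, _, _, arr sd sc, arr rd rc => arr (rd.trans sd) (sc.trans rc)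
  | _, _, _, anyArr _ _ s, arr _ rc => anyArr _ _ (s.trans rc)
  | _, _, _, atomArr _ s, arr _ rc => atomArr _ (s.trans rc)
  | _, _, _, arrAtom sd sc, atomArr δ r => arr ((omegaR δ).trans sd) (sc.trans r)
  | _, _, _, arr sd sc, arrAtom rd rc => arrAtom (rd.trans sd) (sc.trans rc)
  | _, _, _, anyArr _ _ s, arrAtom _ rc => (omegaR _).trans (s.trans rc)
  | _, _, _, atomArr _ s, arrAtom _ rc => s.trans rc
termination_by σ τ ρ => σ.size + τ.size + ρ.size
decreasing_by all_goals simp only [Ty.size]; omega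

theorem coerces {σ τ : Ty} (h : CutFreeLe σ τ) : Coerces σ τ := by
  induction h with
  | refl σ => exact .refl σ
  | omegaR σ => exact .omega σ
  | preAnd₁ _ _ ih => exact ih.precomp Deriv.andE₁
  | preAnd₂ _ _ ih => exact ih.precomp Deriv.andE₂
  | preOr _ _ ih₁ ih₂ => exact ih₁.or_left ih₂
  | postAnd _ _ ih₁ ih₂ => exact ih₁.and_right ih₂
  | postOr₁ _ _ ih => exact ih.postcomp Deriv.orI₁
  | postOr₂ _ _ ih => exact ih.postcomp Deriv.orI₂
  | arr _ _ ih₁ ih₂ => exact ih₁.arr ih₂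
  | anyArr _ δ _ ih => exact ((Coerces.omega δ).arr ih).precomp fun d => d.toOmega.eqv .omegaFun
  | atomArr δ _ ih => exact ((Coerces.omega δ).arr ih).precomp fun d => d.eqv (.atomFun _)
  | arrAtom _ _ ih₁ ih₂ => exact (ih₁.arr ih₂).postcomp fun d => d.eqv (.symm (.atomFun _))

end CutFreeLe

theorem NormLe.cutFreeLe {σ τ : Ty} (h : NormLe σ τ) : CutFreeLe σ τ := by
  induction h with
  | refl σ => exact .refl σ
  | trans _ _ ih₁ ih₂ => exact ih₁.trans ih₂
  | leOmega σ => exact .omegaR σ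
  | andE₁ σ τ => exact .preAnd₁ τ (.refl σ)
  | andE₂ σ τ => exact .preAnd₂ σ (.refl τ)
  | orI₁ σ τ => exact .postOr₁ τ (.refl σ)
  | orI₂ σ τ => exact .postOr₂ σ (.refl τ)
  | andI _ _ ih₁ ih₂ => exact .postAnd ih₁ ih₂
  | orE _ _ ih₁ ih₂ => exact .preOr ih₁ ih₂
  | atomArr a σ => exact .atomArr σ (.refl _)
  | omegaArr σ => exact .anyArr _ σ (.refl _)
  | arr _ _ ih₁ ih₂ => exact .arr ih₁ ih₂

theorem NormLe.coerces {σ τ : Ty} (h : NormLe σ τ) : Coerces σ τ :=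
  h.cutFreeLe.coerces

def CoeEquiv (σ τ : Ty) : Prop := Coerces σ τ ∧ Coerces τ σ

namespace CoeEquiv

variable {σ σ' τ τ' : Ty}

theorem refl (σ : Ty) : CoeEquiv σ σ := ⟨.refl σ, .refl σ⟩

theorem arr (h₁ : CoeEquiv σ σ') (h₂ : CoeEquiv τ τ') :
    CoeEquiv (Ty.arr σ τ) (Ty.arr σ' τ') :=
  ⟨h₁.2.arr h₂.1, h₁.1.arr h₂.2⟩

theorem and (h₁ : CoeEquiv σ σ') (h₂ : CoeEquiv τ τ') :
    CoeEquiv (Ty.and σ τ) (Ty.and σ' τ') :=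
  ⟨h₁.1.and h₂.1, h₁.2.and h₂.2⟩

theorem or (h₁ : CoeEquiv σ σ') (h₂ : CoeEquiv τ τ') :
    CoeEquiv (Ty.or σ τ) (Ty.or σ' τ') :=
  ⟨h₁.1.or h₂.1, h₁.2.or h₂.2⟩

theorem strongIso (h : CoeEquiv σ τ) : StrongIso σ τ := by
  obtain ⟨N₁, hN₁⟩ := h.1.deriv_idTower
  obtain ⟨N₂, hN₂⟩ := h.2.deriv_idTower
  exact ⟨idTower (max N₁ N₂), fhi_idTower _, hN₁ _ (le_max_left _ _), hN₂ _ (le_max_right _ _)⟩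

theorem fill (C : TyCtx) (h : CoeEquiv σ τ) : CoeEquiv (C.fill σ) (C.fill τ) := by
  induction C with
  | hole => exact h
  | arrL _ ρ ih => exact ih.arr (refl ρ)
  | arrR ρ _ ih => exact (refl ρ).arr ih
  | andL _ ρ ih => exact ih.and (refl ρ)
  | andR ρ _ ih => exact (refl ρ).and ih
  | orL _ ρ ih => exact ih.or (refl ρ)
  | orR ρ _ ih => exact (refl ρ).or ih

theorem imp_and (σ τ ρ : Ty) :
    CoeEquiv (Ty.arr σ (Ty.and τ ρ)) (Ty.and (Ty.arr σ τ) (Ty.arr σ ρ)) :=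
  ⟨((Coerces.refl σ).arr (.of_deriv Deriv.andE₁)).and_right
      ((Coerces.refl σ).arr (.of_deriv Deriv.andE₂)),
    Coerces.arr_and_distrib σ τ ρ⟩

theorem or_imp (σ τ ρ : Ty) :
    CoeEquiv (Ty.arr (Ty.or σ τ) ρ) (Ty.and (Ty.arr σ ρ) (Ty.arr τ ρ)) :=
  ⟨((Coerces.of_deriv Deriv.orI₁).arr (.refl ρ)).and_right
      ((Coerces.of_deriv Deriv.orI₂).arr (.refl ρ)),
    Coerces.arr_or_distrib σ τ ρ⟩

theorem or_and_right (σ τ ρ : Ty) :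
    CoeEquiv (Ty.and (Ty.or σ τ) ρ) (Ty.or (Ty.and σ ρ) (Ty.and τ ρ)) :=
  ⟨(Coerces.of_deriv Deriv.orI₁).or_and_left (.of_deriv Deriv.orI₂),
    ((Coerces.of_deriv Deriv.orI₁).and (.refl ρ)).or_left
      ((Coerces.of_deriv Deriv.orI₂).and (.refl ρ))⟩

theorem and_or_right (σ τ ρ : Ty) :
    CoeEquiv (Ty.or (Ty.and σ τ) ρ) (Ty.and (Ty.or σ ρ) (Ty.or τ ρ)) := by
  refine ⟨((Coerces.of_deriv Deriv.orI₁).and (.of_deriv Deriv.orI₁)).or_left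
    ((Coerces.of_deriv Deriv.orI₂).and_right (.of_deriv Deriv.orI₂)), ?_⟩
  have hρ : ∀ ζ, Coerces (Ty.and ρ ζ) (Ty.or (Ty.and σ τ) ρ) := fun _ =>
    .of_deriv (Deriv.orI₂ ∘ Deriv.andE₁)
  have hσ : Coerces (Ty.and σ (Ty.or τ ρ)) (Ty.or (Ty.and σ τ) ρ) :=
    ((Coerces.of_deriv (Deriv.orI₁ ∘ Deriv.andComm)).or_and_left (hρ σ)).precomp Deriv.andComm
  exact hσ.or_and_left (hρ _)

end CoeEquiv

theorem InnerStep.coeEquiv {σ τ : Ty} (h : InnerStep σ τ) : CoeEquiv σ τ := by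
  cases h with
  | atomRule a => exact ⟨.of_deriv (·.eqv (.symm (.atomFun a))), .of_deriv (·.eqv (.atomFun a))⟩
  | omegaRule hle _ => exact ⟨.omega _, hle.coerces⟩
  | distArrAnd σ τ ρ => exact .imp_and σ τ ρ
  | distAndArr σ τ ρ ζ => exact (CoeEquiv.or_and_right σ τ ρ).arr (.refl ζ)
  | distOrArr σ τ ρ => exact .or_imp σ τ ρ
  | distArrOr σ τ ρ ζ => exact (CoeEquiv.refl σ).arr (.and_or_right τ ρ ζ)
  | eraseAnd hle => exact ⟨.of_deriv Deriv.andE₁, (Coerces.refl _).and_right hle.coerces⟩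
  | eraseOr hle => exact ⟨hle.coerces.or_left (.refl _), .of_deriv Deriv.orI₂⟩

theorem TopStep.coeEquiv {σ τ : Ty} (h : TopStep σ τ) : CoeEquiv σ τ := by
  induction h with
  | ctx C h => exact h.coeEquiv.fill C
  | dist σ τ ρ => exact .and_or_right σ τ ρ
  | arrR σ _ ih => exact (CoeEquiv.refl σ).arr ih

/-- Soundness of the normalisation rules: each inner rule `σ ⇝ τ` and each
top rule `σ ⟹ τ` preserves strong isomorphism. -/
theorem normalisation_rules_sound :
    (∀ σ τ : Ty, InnerStep σ τ → StrongIso σ τ) ∧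
    (∀ σ τ : Ty, TopStep σ τ → StrongIso σ τ) :=
  ⟨fun _ _ h => h.coeEquiv.strongIso, fun _ _ h => h.coeEquiv.strongIso⟩

end TypeIso
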